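/- Let k : (0,∞) → [0,∞) be nonincreasing and lower semicontinuous, let σ be a locally finite positive Borel measure on ℝ^n, let 1 < p < ∞ and 0 < c < ∞. Suppose σ is doubling and the pair (k,σ) satisfies the LBO condition. Then there exist constants (independent of μ) such that for every locally finite positive Borel measure μ on ℝ^n, ∑_{Q∈𝒟} k(c r_Q) σ(Q) (k̄(r_Q)(x_Q))^{p'−1} μ(Q)^{p'} is comparable to ∑_{Q∈𝒟} k(r_Q) σ(Q) (k̄(r_Q)(x_Q))^{p'−1} μ(Q)^{p'}, where x_Q denotes the center of Q. -/

import Mathlib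

open MeasureTheory ENNReal Set
open scoped Classical ENNReal NNReal

noncomputable section

/-- We model `ℝ^n` as `EuclideanSpace ℝ (Fin n)`. -/
abbrev Euc (n : ℕ) := EuclideanSpace ℝ (Fin n)

/-- Indices `(k, m)` of dyadic cubes in `ℝ^n`. -/
abbrev DIdx (n : ℕ) := ℤ × (Fin n → ℤ)

/-- The dyadic cube with index `q = (k, m)`, namely `2^{-k}(m + [0,1)^n)`. -/
def dCube (n : ℕ) (q : DIdx n) : Set (Euc n) :=
  {x | ∀ i, (q.2 i : ℝ) ≤ (2:ℝ) ^ q.1 * x i ∧ (2:ℝ) ^ q.1 * x i < (q.2 i : ℝ) + 1}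

/-- The side length of the dyadic cube of index `q = (k, m)` is `2^{-k}`. -/
def sideLen (n : ℕ) (q : DIdx n) : ℝ := (2:ℝ) ^ (-q.1)

/-- Characteristic function of a dyadic cube, with values in `ℝ≥0∞`. -/
def ch (n : ℕ) (q : DIdx n) (x : Euc n) : ℝ≥0∞ := (dCube n q).indicator 1 x

/-- `K̄(Q)(x) = σ(Q)⁻¹ ∑_{Q' ⊆ Q} K(Q') σ(Q') χ_{Q'}(x)`.
(Since `σ(Q') ≤ σ(Q)` for `Q' ⊆ Q`, this is automatically `0` when `σ(Q) = 0`,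
by the convention `∞ · 0 = 0` in `ℝ≥0∞`.) -/
def Kbar (n : ℕ) (σ : Measure (Euc n)) (K : DIdx n → ℝ≥0∞) (q : DIdx n) (x : Euc n) : ℝ≥0∞ :=
  (σ (dCube n q))⁻¹ *
    ∑' q' : DIdx n, if dCube n q' ⊆ dCube n q then K q' * σ (dCube n q') * ch n q' x else 0

/-- `k̄(r)(x) = (1/σ(B(x,r))) ∫_0^r k(s) σ(B(x,s)) ds/s`. -/
def kbar (n : ℕ) (σ : Measure (Euc n)) (k : ℝ → ℝ) (r : ℝ) (x : Euc n) : ℝ≥0∞ :=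
  (σ (Metric.ball x r))⁻¹ *
    ∫⁻ s in Ioo (0:ℝ) r, ENNReal.ofReal (k s / s) * σ (Metric.ball x s)

/-- `σ` is a doubling measure: `σ(B(x,2r)) ≤ C₀ σ(B(x,r))` for all `x`, `r > 0`. -/
def Doubling (n : ℕ) (σ : Measure (Euc n)) : Prop :=
  ∃ C₀ : ℝ, 0 < C₀ ∧ ∀ (x : Euc n) (r : ℝ), 0 < r →
    σ (Metric.ball x (2 * r)) ≤ ENNReal.ofReal C₀ * σ (Metric.ball x r)

/-- The pair `(k,σ)` satisfies the logarithmic bounded oscillation (LBO) condition: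
`sup_{y ∈ B(x,r)} k̄(r)(y) ≤ A inf_{y ∈ B(x,r)} k̄(r)(y)` uniformly in `x`, `r`. -/
def LBO (n : ℕ) (σ : Measure (Euc n)) (k : ℝ → ℝ) : Prop :=
  ∃ A : ℝ, 0 < A ∧ ∀ (x : Euc n) (r : ℝ), 0 < r →
    ∀ y ∈ Metric.ball x r, ∀ z ∈ Metric.ball x r,
      kbar n σ k r y ≤ ENNReal.ofReal A * kbar n σ k r z

/-- The center of the dyadic cube with index `q = (k, m)`. -/
def dCenter (n : ℕ) (q : DIdx n) : Euc n :=
  WithLp.toLp 2 (fun i => ((q.2 i : ℝ) + 1 / 2) * (2:ℝ) ^ (-q.1))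

/-- The sum `∑_Q k(c r_Q) σ(Q) (k̄(r_Q)(x_Q))^{p'-1} μ(Q)^{p'}`, where `x_Q` is the center
of `Q` and `p' = p/(p-1)`. -/
def dyadicWolffSum (n : ℕ) (σ : Measure (Euc n)) (k : ℝ → ℝ) (p c : ℝ)
    (μ : Measure (Euc n)) : ℝ≥0∞ :=
  ∑' Q : DIdx n, ENNReal.ofReal (k (c * sideLen n Q)) * σ (dCube n Q) *
    (kbar n σ k (sideLen n Q) (dCenter n Q)) ^ (p / (p - 1) - 1) *
      (μ (dCube n Q)) ^ (p / (p - 1))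

/-!
Passing from a dyadic cube `Q` to its `2ⁿ` children halves `r_Q`, so `k(c r_Q) = k(2c r_{Q'})`
for every child `Q'`. The remaining factors of the `Q`-term are controlled by those of the
`Q'`-terms: `σ(Q) ≲ σ(Q')` by doubling, `μ(Q)^{p'} ≤ 2^{n(p'-1)} ∑_{Q'} μ(Q')^{p'}` by
convexity, and `k̄(r_Q)(x_Q) ≲ k̄(r_Q/2)(x_{Q'})`: enlarge the radius at `x_Q` (doubling), move
the centre to `x_{Q'}` (LBO), and shrink the radius back using `k̄(2r) ≤ (1 + 2C₀) k̄(r)`, which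
holds because `k` is nonincreasing. Hence the sum with parameter `c` is at most a constant times
the sum with parameter `2c`; since the sum also decreases in `c`, any two parameters give
comparable sums.
-/

open Metric

theorem ENNReal.inv_le_mul_inv_of_le_mul {a b c : ℝ≥0∞} (h : b ≤ c * a) (hb : b ≠ 0)
    (hc : c ≠ ∞) : a⁻¹ ≤ c * b⁻¹ := by
  have hc0 : c ≠ 0 := by rintro rfl; exact hb (by simpa using h)
  calc a⁻¹ = c * (c * a)⁻¹ := by
        rw [ENNReal.mul_inv (Or.inl hc0) (Or.inl hc), ← mul_assoc,
          ENNReal.mul_inv_cancel hc0 hc, one_mul]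
    _ ≤ c * b⁻¹ := by gcongr

section DoublingMeasure

variable {X : Type*} [PseudoMetricSpace X] [MeasurableSpace X] {σ : Measure X} {D : ℝ≥0}

def DoublingWith (σ : Measure X) (D : ℝ≥0) : Prop :=
  ∀ (x : X) (r : ℝ), 0 < r → σ (ball x (2 * r)) ≤ D * σ (ball x r)

theorem measure_ball_two_pow_mul_le
    (hD : DoublingWith σ D) (L : ℕ) (x : X) {r : ℝ} (hr : 0 < r) :
    σ (ball x (2 ^ L * r)) ≤ (D : ℝ≥0∞) ^ L * σ (ball x r) := by
  induction L with
  | zero => simp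
  | succ L ih =>
    calc σ (ball x (2 ^ (L + 1) * r)) = σ (ball x (2 * (2 ^ L * r))) := by ring_nf
      _ ≤ D * σ (ball x (2 ^ L * r)) := hD x _ (by positivity)
      _ ≤ D * ((D : ℝ≥0∞) ^ L * σ (ball x r)) := by gcongr
      _ = (D : ℝ≥0∞) ^ (L + 1) * σ (ball x r) := by rw [pow_succ', mul_assoc]

theorem measure_ball_le_pow_mul
    (hD : DoublingWith σ D) (L : ℕ) (x : X) {r r' : ℝ} (hr : 0 < r) (hr' : r' ≤ 2 ^ L * r) :
    σ (ball x r') ≤ (D : ℝ≥0∞) ^ L * σ (ball x r) :=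
  (measure_mono (ball_subset_ball hr')).trans (measure_ball_two_pow_mul_le hD L x hr)

end DoublingMeasure

section KBar

variable {n : ℕ} {σ : Measure (Euc n)} {k : ℝ → ℝ} {D : ℝ≥0} {x : Euc n} {r : ℝ}

def kIntegral (σ : Measure (Euc n)) (k : ℝ → ℝ) (r : ℝ) (x : Euc n) : ℝ≥0∞ :=
  ∫⁻ s in Ioo (0:ℝ) r, ENNReal.ofReal (k s / s) * σ (ball x s)

theorem kbar_eq_inv_mul_kIntegral :
    kbar n σ k r x = (σ (ball x r))⁻¹ * kIntegral σ k r x := rfl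

theorem kIntegral_mono {r' : ℝ} (h : r ≤ r') : kIntegral σ k r x ≤ kIntegral σ k r' x :=
  lintegral_mono_set (Ioo_subset_Ioo le_rfl h)

theorem kbar_eq_zero_of_measure_ball_eq_zero (h : σ (ball x r) = 0) : kbar n σ k r x = 0 := by
  have : kIntegral σ k r x = 0 :=
    (setLIntegral_congr_fun measurableSet_Ioo fun s hs => by
      rw [measure_mono_null (ball_subset_ball hs.2.le) h, mul_zero]).trans lintegral_zero
  rw [kbar_eq_inv_mul_kIntegral, this, mul_zero]

theorem kbar_le_pow_mul_kbar_of_le (hD : DoublingWith σ D)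
    (L : ℕ) {r' : ℝ} (hr : 0 < r) (h : r ≤ r') (h' : r' ≤ 2 ^ L * r) :
    kbar n σ k r x ≤ (D : ℝ≥0∞) ^ L * kbar n σ k r' x := by
  by_cases hb : σ (ball x r) = 0
  · simp [kbar_eq_zero_of_measure_ball_eq_zero hb]
  have hinv : (σ (ball x r))⁻¹ ≤ (D : ℝ≥0∞) ^ L * (σ (ball x r'))⁻¹ :=
    ENNReal.inv_le_mul_inv_of_le_mul (measure_ball_le_pow_mul hD L x hr h')
      (fun h0 => hb (measure_mono_null (ball_subset_ball h) h0)) (by simp)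
  calc kbar n σ k r x ≤ (D : ℝ≥0∞) ^ L * (σ (ball x r'))⁻¹ * kIntegral σ k r' x :=
        mul_le_mul' hinv (kIntegral_mono h)
    _ = (D : ℝ≥0∞) ^ L * kbar n σ k r' x := by rw [mul_assoc, kbar_eq_inv_mul_kIntegral]

section Antitone

variable (hk0 : ∀ r ∈ Ioi (0:ℝ), 0 ≤ k r) (hmono : AntitoneOn k (Ioi (0:ℝ)))
include hk0 hmono

theorem ofReal_mul_measure_ball_half_le (hr : 0 < r) :
    ENNReal.ofReal (k r) * σ (ball x (r / 2)) ≤ 2 * kIntegral σ k r x := by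
  have hkr : 0 ≤ k r / r := div_nonneg (hk0 r hr) hr.le
  have hk : ENNReal.ofReal (k r) = 2 * (ENNReal.ofReal (k r / r) * ENNReal.ofReal (r - r / 2)) := by
    rw [← ENNReal.ofReal_mul hkr, ← ENNReal.ofReal_ofNat 2, ← ENNReal.ofReal_mul zero_le_two]
    congr 1
    field_simp
    ring
  calc ENNReal.ofReal (k r) * σ (ball x (r / 2))
      = 2 * ∫⁻ _ in Ioo (r / 2) r, ENNReal.ofReal (k r / r) * σ (ball x (r / 2)) := by
        rw [setLIntegral_const, Real.volume_Ioo, hk]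
        ring
    _ ≤ 2 * ∫⁻ s in Ioo (r / 2) r, ENNReal.ofReal (k s / s) * σ (ball x s) := by
        gcongr 2 * ?_
        refine setLIntegral_mono' measurableSet_Ioo fun s ⟨hs₁, hs₂⟩ => ?_
        have hs : 0 < s := by linarith
        exact mul_le_mul' (ENNReal.ofReal_le_ofReal (div_le_div₀ (hk0 s hs) (hmono hs hr hs₂.le)
          hs hs₂.le)) (measure_mono (ball_subset_ball hs₁.le))
    _ ≤ 2 * kIntegral σ k r x := by
        gcongr 2 * ?_
        exact lintegral_mono_set (Ioo_subset_Ioo (by positivity) le_rfl)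

theorem kIntegral_two_mul_le (hr : 0 < r) :
    kIntegral σ k (2 * r) x ≤
      kIntegral σ k r x + ENNReal.ofReal (k r) * σ (ball x (2 * r)) := by
  have hkr : 0 ≤ k r / r := div_nonneg (hk0 r hr) hr.le
  have hsplit : Ioo 0 (2 * r) ⊆ Ioo 0 r ∪ Ico r (2 * r) := fun s ⟨hs₁, hs₂⟩ =>
    (lt_or_ge s r).imp (fun h => ⟨hs₁, h⟩) (fun h => ⟨h, hs₂⟩)
  calc kIntegral σ k (2 * r) x
      ≤ kIntegral σ k r x +
          ∫⁻ s in Ico r (2 * r), ENNReal.ofReal (k s / s) * σ (ball x s) :=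
        (lintegral_mono_set hsplit).trans (lintegral_union_le _ _ _)
    _ ≤ kIntegral σ k r x +
          ∫⁻ _ in Ico r (2 * r), ENNReal.ofReal (k r / r) * σ (ball x (2 * r)) := by
        gcongr kIntegral σ k r x + ?_
        refine setLIntegral_mono' measurableSet_Ico fun s ⟨hs₁, hs₂⟩ => ?_
        have hs : 0 < s := hr.trans_le hs₁
        exact mul_le_mul' (ENNReal.ofReal_le_ofReal (div_le_div₀ (hk0 r hr) (hmono hr hs hs₁)
          hr hs₁)) (measure_mono (ball_subset_ball hs₂.le))
    _ = kIntegral σ k r x + ENNReal.ofReal (k r) * σ (ball x (2 * r)) := by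
        rw [setLIntegral_const, Real.volume_Ico, mul_right_comm, ← ENNReal.ofReal_mul hkr]
        congr 3
        field_simp
        ring

theorem ofReal_le_two_mul_mul_kbar [IsLocallyFiniteMeasure σ]
    (hD : DoublingWith σ D) (hr : 0 < r) (hb : σ (ball x r) ≠ 0) :
    ENNReal.ofReal (k r) ≤ 2 * D * kbar n σ k r x := by
  have hba : σ (ball x r) ≤ D * σ (ball x (r / 2)) := by
    simpa [mul_div_cancel₀ r two_ne_zero] using hD x (r / 2) (by positivity)
  have ha : σ (ball x (r / 2)) ≠ 0 := fun h0 => hb (by simpa [h0] using hba)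
  have hinv := ENNReal.inv_le_mul_inv_of_le_mul hba hb ENNReal.coe_ne_top
  calc ENNReal.ofReal (k r)
      = ENNReal.ofReal (k r) * σ (ball x (r / 2)) * (σ (ball x (r / 2)))⁻¹ := by
        rw [mul_assoc, ENNReal.mul_inv_cancel ha measure_ball_lt_top.ne, mul_one]
    _ ≤ 2 * kIntegral σ k r x * (D * (σ (ball x r))⁻¹) :=
        mul_le_mul' (ofReal_mul_measure_ball_half_le hk0 hmono hr) hinv
    _ = 2 * D * kbar n σ k r x := by rw [kbar_eq_inv_mul_kIntegral]; ring

theorem kbar_two_mul_le [IsLocallyFiniteMeasure σ]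
    (hD : DoublingWith σ D) (hr : 0 < r) :
    kbar n σ k (2 * r) x ≤ (1 + 2 * D) * kbar n σ k r x := by
  by_cases hd : σ (ball x (2 * r)) = 0
  · simp [kbar_eq_zero_of_measure_ball_eq_zero hd]
  have hb : σ (ball x r) ≠ 0 := fun h0 => hd (by simpa [h0] using hD x r hr)
  calc kbar n σ k (2 * r) x
      ≤ (σ (ball x (2 * r)))⁻¹ *
          (kIntegral σ k r x + ENNReal.ofReal (k r) * σ (ball x (2 * r))) := by
        rw [kbar_eq_inv_mul_kIntegral]
        gcongr
        exact kIntegral_two_mul_le hk0 hmono hr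
    _ = (σ (ball x (2 * r)))⁻¹ * kIntegral σ k r x + ENNReal.ofReal (k r) := by
        rw [mul_add, mul_left_comm, ENNReal.inv_mul_cancel hd measure_ball_lt_top.ne, mul_one]
    _ ≤ kbar n σ k r x + 2 * D * kbar n σ k r x := by
        refine add_le_add ?_ (ofReal_le_two_mul_mul_kbar hk0 hmono hD hr hb)
        rw [kbar_eq_inv_mul_kIntegral]
        gcongr
        linarith
    _ = (1 + 2 * D) * kbar n σ k r x := by ring

theorem kbar_two_pow_mul_le [IsLocallyFiniteMeasure σ]
    (hD : DoublingWith σ D)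
    (L : ℕ) (hr : 0 < r) : kbar n σ k (2 ^ L * r) x ≤ (1 + 2 * D) ^ L * kbar n σ k r x := by
  induction L with
  | zero => simp
  | succ L ih =>
    calc kbar n σ k (2 ^ (L + 1) * r) x = kbar n σ k (2 * (2 ^ L * r)) x := by ring_nf
      _ ≤ (1 + 2 * D) * kbar n σ k (2 ^ L * r) x := kbar_two_mul_le hk0 hmono hD (by positivity)
      _ ≤ (1 + 2 * D) * ((1 + 2 * D) ^ L * kbar n σ k r x) := by gcongr
      _ = (1 + 2 * D) ^ (L + 1) * kbar n σ k r x := by rw [pow_succ', mul_assoc]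

end Antitone

end KBar

section DyadicCube

variable {n : ℕ} {q : DIdx n} {y z : Euc n}

theorem sideLen_pos (q : DIdx n) : 0 < sideLen n q := by
  unfold sideLen; positivity

theorem mem_dCube_iff :
    y ∈ dCube n q ↔ ∀ i, q.2 i * sideLen n q ≤ y i ∧ y i < (q.2 i + 1) * sideLen n q := by
  have h : (0:ℝ) < 2 ^ q.1 := by positivity
  simp only [dCube, sideLen, zpow_neg, mem_ofPred_eq, mul_inv_le_iff₀ h, lt_mul_inv_iff₀ h,
    mul_comm (y _)]

theorem dCenter_apply (q : DIdx n) (i : Fin n) :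
    dCenter n q i = (q.2 i + 1 / 2) * sideLen n q := rfl

theorem abs_sub_dCenter_le (hy : y ∈ dCube n q) (i : Fin n) :
    |y i - dCenter n q i| ≤ sideLen n q / 2 := by
  obtain ⟨h₁, h₂⟩ := mem_dCube_iff.1 hy i
  rw [abs_le, dCenter_apply]
  constructor <;> linarith

theorem dCenter_mem_dCube (q : DIdx n) : dCenter n q ∈ dCube n q := by
  refine mem_dCube_iff.2 fun i => ?_
  rw [dCenter_apply]
  constructor <;> linarith [sideLen_pos q]

theorem dist_lt_of_mem_dCube (hy : y ∈ dCube n q) (hz : z ∈ dCube n q) :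
    dist y z < 2 ^ n * sideLen n q := by
  have hs := sideLen_pos q
  have hcoord : ∀ i, dist (y i) (z i) ≤ sideLen n q := fun i => by
    rw [Real.dist_eq]
    linarith [abs_sub_le (y i) (dCenter n q i) (z i), abs_sub_dCenter_le hy i,
      abs_sub_comm (dCenter n q i) (z i) ▸ abs_sub_dCenter_le hz i]
  have hn : (n : ℝ) < 2 ^ n := by exact_mod_cast n.lt_two_pow_self
  rw [EuclideanSpace.dist_eq, Real.sqrt_lt' (by positivity)]
  calc ∑ i, dist (y i) (z i) ^ 2 ≤ ∑ _i : Fin n, sideLen n q ^ 2 :=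
        Finset.sum_le_sum fun i _ => pow_le_pow_left₀ dist_nonneg (hcoord i) 2
    _ = n * sideLen n q ^ 2 := by simp
    _ < (2 ^ n * sideLen n q) ^ 2 := by
        have : (n : ℝ) < (2 ^ n) ^ 2 := by
          nlinarith [one_le_pow₀ (M₀ := ℝ) one_le_two (n := n)]
        rw [mul_pow]
        exact mul_lt_mul_of_pos_right this (pow_pos hs 2)

theorem ball_dCenter_subset_dCube (q : DIdx n) :
    ball (dCenter n q) (sideLen n q / 2) ⊆ dCube n q := fun y hy => by
  refine mem_dCube_iff.2 fun i => ?_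
  have := (PiLp.dist_apply_le y (dCenter n q) i).trans_lt hy
  rw [Real.dist_eq, abs_lt, dCenter_apply] at this
  constructor <;> linarith

/-- The child of the dyadic cube `q` lying in the `ε i`-th half of `q` in each coordinate `i`. -/
def childIdx (q : DIdx n) (ε : Fin n → Fin 2) : DIdx n :=
  (q.1 + 1, fun i => 2 * q.2 i + ((ε i : ℕ) : ℤ))

theorem sideLen_childIdx (q : DIdx n) (ε : Fin n → Fin 2) :
    sideLen n (childIdx q ε) = sideLen n q / 2 := by
  simp [sideLen, childIdx, zpow_add₀, div_eq_mul_inv, mul_comm]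

theorem mem_dCube_childIdx_iff {ε : Fin n → Fin 2} :
    y ∈ dCube n (childIdx q ε) ↔ ∀ i,
      2 * q.2 i + ((ε i : ℕ) : ℝ) ≤ 2 * (2 ^ q.1 * y i) ∧
        2 * (2 ^ q.1 * y i) < 2 * q.2 i + ((ε i : ℕ) : ℝ) + 1 := by
  simp [dCube, childIdx, zpow_add_one₀, mul_comm, mul_assoc]

theorem dCube_childIdx_subset (q : DIdx n) (ε : Fin n → Fin 2) :
    dCube n (childIdx q ε) ⊆ dCube n q := fun y hy i => by
  obtain ⟨h₁, h₂⟩ := mem_dCube_childIdx_iff.1 hy i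
  have hε : ((ε i : ℕ) : ℝ) ≤ 1 := by exact_mod_cast Nat.le_of_lt_succ (ε i).isLt
  have : (0 : ℝ) ≤ (ε i : ℕ) := Nat.cast_nonneg _
  constructor <;> linarith

theorem dCube_subset_iUnion_childIdx (q : DIdx n) :
    dCube n q ⊆ ⋃ ε, dCube n (childIdx q ε) := fun y hy => by
  refine mem_iUnion.2 ⟨fun i => if 2 * q.2 i + 1 ≤ 2 * (2 ^ q.1 * y i) then 1 else 0,
    mem_dCube_childIdx_iff.2 fun i => ?_⟩
  obtain ⟨h₁, h₂⟩ := hy i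
  split_ifs with h <;> simp only [Fin.val_one, Fin.val_zero, Nat.cast_one, Nat.cast_zero] <;>
    constructor <;> linarith

theorem childIdx_injective :
    Function.Injective fun qε : DIdx n × (Fin n → Fin 2) => childIdx qε.1 qε.2 := by
  rintro ⟨⟨κ, m⟩, ε⟩ ⟨⟨κ', m'⟩, ε'⟩ h
  simp only [childIdx, Prod.mk.injEq] at h
  obtain ⟨hκ, hm⟩ := h
  have key : ∀ i, m i = m' i ∧ ε i = ε' i := fun i => by
    have := congrFun hm i
    have := (ε i).isLt
    have := (ε' i).isLt
    exact ⟨by omega, Fin.ext (by omega)⟩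
  simp only [Prod.mk.injEq]
  exact ⟨⟨by omega, funext fun i => (key i).1⟩, funext fun i => (key i).2⟩

theorem measure_dCube_le_sum_childIdx (μ : Measure (Euc n)) (q : DIdx n) :
    μ (dCube n q) ≤ ∑ ε, μ (dCube n (childIdx q ε)) :=
  (measure_mono (dCube_subset_iUnion_childIdx q)).trans (measure_iUnion_fintype_le μ _)

theorem measure_dCube_rpow_le_sum_childIdx (μ : Measure (Euc n)) {u : ℝ} (hu : 1 ≤ u)
    (q : DIdx n) :
    μ (dCube n q) ^ u ≤ (2 ^ n) ^ (u - 1) * ∑ ε, μ (dCube n (childIdx q ε)) ^ u :=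
  calc μ (dCube n q) ^ u ≤ (∑ ε, μ (dCube n (childIdx q ε))) ^ u :=
        ENNReal.rpow_le_rpow (measure_dCube_le_sum_childIdx μ q) (by linarith)
    _ ≤ _ := by
        simpa using ENNReal.rpow_sum_le_const_mul_sum_rpow Finset.univ
          (fun ε => μ (dCube n (childIdx q ε))) hu

end DyadicCube

section Comparison

variable {n : ℕ} {σ : Measure (Euc n)} {k : ℝ → ℝ} {D A : ℝ≥0}

def LBOWith (σ : Measure (Euc n)) (k : ℝ → ℝ) (A : ℝ≥0) : Prop :=
  ∀ (x : Euc n) (r : ℝ), 0 < r → ∀ y ∈ ball x r, ∀ z ∈ ball x r,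
    kbar n σ k r y ≤ A * kbar n σ k r z

theorem measure_dCube_le_measure_childIdx (hD : DoublingWith σ D) (q : DIdx n)
    (ε : Fin n → Fin 2) :
    σ (dCube n q) ≤ (D : ℝ≥0∞) ^ (n + 2) * σ (dCube n (childIdx q ε)) := by
  have hxc := dCube_childIdx_subset q ε (dCenter_mem_dCube _)
  calc σ (dCube n q) ≤ σ (ball (dCenter n (childIdx q ε)) (2 ^ n * sideLen n q)) :=
        measure_mono fun y hy => dist_lt_of_mem_dCube hy hxc
    _ ≤ (D : ℝ≥0∞) ^ (n + 2) *
          σ (ball (dCenter n (childIdx q ε)) (sideLen n (childIdx q ε) / 2)) := by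
        refine measure_ball_le_pow_mul hD (n + 2) _ (half_pos (sideLen_pos _)) ?_
        rw [sideLen_childIdx, pow_add]
        linarith
    _ ≤ (D : ℝ≥0∞) ^ (n + 2) * σ (dCube n (childIdx q ε)) := by
        gcongr
        exact ball_dCenter_subset_dCube _

theorem kbar_dCenter_le_childIdx [IsLocallyFiniteMeasure σ]
    (hk0 : ∀ r ∈ Ioi (0:ℝ), 0 ≤ k r) (hmono : AntitoneOn k (Ioi (0:ℝ)))
    (hD : DoublingWith σ D) (hL : LBOWith σ k A) (q : DIdx n) (ε : Fin n → Fin 2) :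
    kbar n σ k (sideLen n q) (dCenter n q) ≤ (D : ℝ≥0∞) ^ n * A * (1 + 2 * D) ^ (n + 1) *
      kbar n σ k (sideLen n (childIdx q ε)) (dCenter n (childIdx q ε)) := by
  set s := sideLen n q
  set R := 2 ^ n * s
  have hs : 0 < s := sideLen_pos q
  have hR : 0 < R := by positivity
  have hxQ := dCenter_mem_dCube q
  have hxc := dCube_childIdx_subset q ε (dCenter_mem_dCube _)
  rw [sideLen_childIdx]
  calc kbar n σ k s (dCenter n q) ≤ (D : ℝ≥0∞) ^ n * kbar n σ k R (dCenter n q) :=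
        kbar_le_pow_mul_kbar_of_le hD n hs (le_mul_of_one_le_left hs.le (one_le_pow₀ one_le_two))
          le_rfl
    _ ≤ (D : ℝ≥0∞) ^ n * (A * kbar n σ k R (dCenter n (childIdx q ε))) := by
        gcongr
        exact hL _ R hR _ (mem_ball_self hR) _ (dist_lt_of_mem_dCube hxc hxQ)
    _ ≤ (D : ℝ≥0∞) ^ n * (A * ((1 + 2 * D) ^ (n + 1) *
          kbar n σ k (s / 2) (dCenter n (childIdx q ε)))) := by
        have hR' : R = 2 ^ (n + 1) * (s / 2) := by ring
        rw [hR']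
        gcongr
        exact kbar_two_pow_mul_le hk0 hmono hD (n + 1) (by positivity)
    _ = _ := by ring

end Comparison

section WolffSum

variable {n : ℕ} {σ : Measure (Euc n)} {k : ℝ → ℝ} {t u : ℝ}

def wolffWeight (σ : Measure (Euc n)) (k : ℝ → ℝ) (t a : ℝ) (q : DIdx n) : ℝ≥0∞ :=
  ENNReal.ofReal (k (a * sideLen n q)) * σ (dCube n q) *
    kbar n σ k (sideLen n q) (dCenter n q) ^ t

/-- The `q`-th summand of `dyadicWolffSum`, with general exponents `t = p' - 1` and `u = p'`. -/
def wolffTerm (σ : Measure (Euc n)) (k : ℝ → ℝ) (t u a : ℝ) (μ : Measure (Euc n))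
    (q : DIdx n) : ℝ≥0∞ :=
  wolffWeight σ k t a q * μ (dCube n q) ^ u

theorem dyadicWolffSum_eq_tsum_wolffTerm (p c : ℝ) (μ : Measure (Euc n)) :
    dyadicWolffSum n σ k p c μ = ∑' q, wolffTerm σ k (p / (p - 1) - 1) (p / (p - 1)) c μ q :=
  rfl

theorem wolffTerm_anti (hmono : AntitoneOn k (Ioi (0:ℝ))) (μ : Measure (Euc n)) {a b : ℝ}
    (ha : 0 < a) (hab : a ≤ b) (q : DIdx n) :
    wolffTerm σ k t u b μ q ≤ wolffTerm σ k t u a μ q := by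
  have hs := sideLen_pos q
  unfold wolffTerm wolffWeight
  gcongr
  exact hmono (mul_pos ha hs) (mul_pos (ha.trans_le hab) hs)
    (mul_le_mul_of_nonneg_right hab hs.le)

variable [IsLocallyFiniteMeasure σ] {D A : ℝ≥0}
  (hk0 : ∀ r ∈ Ioi (0:ℝ), 0 ≤ k r) (hmono : AntitoneOn k (Ioi (0:ℝ)))
  (hD : DoublingWith σ D) (hL : LBOWith σ k A) (ht : 0 ≤ t)
include hk0 hmono hD hL ht

theorem wolffWeight_le_childIdx (a : ℝ) (q : DIdx n) (ε : Fin n → Fin 2) :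
    wolffWeight σ k t a q ≤ (D : ℝ≥0∞) ^ (n + 2) *
      ((D : ℝ≥0∞) ^ n * A * (1 + 2 * D) ^ (n + 1)) ^ t *
        wolffWeight σ k t (2 * a) (childIdx q ε) := by
  have hk : 2 * a * sideLen n (childIdx q ε) = a * sideLen n q := by
    rw [sideLen_childIdx]; ring
  calc wolffWeight σ k t a q ≤ ENNReal.ofReal (k (a * sideLen n q)) *
        ((D : ℝ≥0∞) ^ (n + 2) * σ (dCube n (childIdx q ε))) *
        ((D : ℝ≥0∞) ^ n * A * (1 + 2 * D) ^ (n + 1) *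
          kbar n σ k (sideLen n (childIdx q ε)) (dCenter n (childIdx q ε))) ^ t := by
        unfold wolffWeight
        gcongr
        · exact measure_dCube_le_measure_childIdx hD q ε
        · exact kbar_dCenter_le_childIdx hk0 hmono hD hL q ε
    _ = _ := by rw [wolffWeight, hk, ENNReal.mul_rpow_of_nonneg _ _ ht]; ring

variable (hu : 1 ≤ u)
include hu

theorem wolffTerm_le_sum_childIdx (μ : Measure (Euc n)) (a : ℝ) (q : DIdx n) :
    wolffTerm σ k t u a μ q ≤
      (D : ℝ≥0∞) ^ (n + 2) * ((D : ℝ≥0∞) ^ n * A * (1 + 2 * D) ^ (n + 1)) ^ t *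
        (2 ^ n) ^ (u - 1) * ∑ ε, wolffTerm σ k t u (2 * a) μ (childIdx q ε) := by
  set M := (D : ℝ≥0∞) ^ (n + 2) * ((D : ℝ≥0∞) ^ n * A * (1 + 2 * D) ^ (n + 1)) ^ t
  calc wolffTerm σ k t u a μ q
      ≤ wolffWeight σ k t a q * ((2 ^ n) ^ (u - 1) * ∑ ε, μ (dCube n (childIdx q ε)) ^ u) :=
        mul_le_mul_right (measure_dCube_rpow_le_sum_childIdx μ hu q) _
    _ = (2 ^ n) ^ (u - 1) * ∑ ε, wolffWeight σ k t a q * μ (dCube n (childIdx q ε)) ^ u := by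
        rw [Finset.mul_sum, Finset.mul_sum, Finset.mul_sum]
        exact Finset.sum_congr rfl fun ε _ => by ring
    _ ≤ (2 ^ n) ^ (u - 1) * ∑ ε,
          M * wolffWeight σ k t (2 * a) (childIdx q ε) * μ (dCube n (childIdx q ε)) ^ u := by
        gcongr with ε
        exact wolffWeight_le_childIdx hk0 hmono hD hL ht a q ε
    _ = _ := by
        simp only [wolffTerm, Finset.mul_sum]
        exact Finset.sum_congr rfl fun ε _ => by ring

theorem exists_tsum_wolffTerm_le_mul_tsum_two_mul :
    ∃ M : ℝ≥0∞, M ≠ ∞ ∧ ∀ (μ : Measure (Euc n)) (a : ℝ),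
      ∑' q, wolffTerm σ k t u a μ q ≤ M * ∑' q, wolffTerm σ k t u (2 * a) μ q := by
  refine ⟨(D : ℝ≥0∞) ^ (n + 2) * ((D : ℝ≥0∞) ^ n * A * (1 + 2 * D) ^ (n + 1)) ^ t *
    (2 ^ n) ^ (u - 1), ?_, fun μ a => ?_⟩
  · exact ENNReal.mul_ne_top (ENNReal.mul_ne_top (by simp)
      (ENNReal.rpow_ne_top_of_nonneg ht (by finiteness))) (ENNReal.rpow_ne_top_of_nonneg
      (by linarith) (by simp))
  let f : DIdx n → ℝ≥0∞ := wolffTerm σ k t u (2 * a) μ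
  calc ∑' q, wolffTerm σ k t u a μ q ≤ ∑' q, _ * ∑ ε, f (childIdx q ε) :=
        ENNReal.tsum_le_tsum fun q => wolffTerm_le_sum_childIdx hk0 hmono hD hL ht hu μ a q
    _ = _ * ∑' qε : DIdx n × (Fin n → Fin 2), f (childIdx qε.1 qε.2) := by
        rw [ENNReal.tsum_mul_left, ENNReal.tsum_prod'
          (f := fun qε : DIdx n × (Fin n → Fin 2) => f (childIdx qε.1 qε.2))]
        simp only [tsum_fintype]
        rfl
    _ ≤ _ * ∑' q, f q := by
        gcongr
        exact ENNReal.tsum_comp_le_tsum_of_injective childIdx_injective f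

theorem exists_tsum_wolffTerm_le_pow_mul :
    ∃ M : ℝ≥0∞, M ≠ ∞ ∧
      ∀ (μ : Measure (Euc n)) (j : ℕ) {a b : ℝ}, 0 < b → b ≤ 2 ^ j * a →
      ∑' q, wolffTerm σ k t u a μ q ≤ M ^ j * ∑' q, wolffTerm σ k t u b μ q := by
  obtain ⟨M, hM, hstep⟩ := exists_tsum_wolffTerm_le_mul_tsum_two_mul hk0 hmono hD hL ht hu
  refine ⟨M, hM, fun μ j a b hb hba => ?_⟩
  have hiter : ∀ (j : ℕ) (a : ℝ), ∑' q, wolffTerm σ k t u a μ q ≤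
      M ^ j * ∑' q, wolffTerm σ k t u (2 ^ j * a) μ q := by
    intro j
    induction j with
    | zero => simp
    | succ j ih =>
      intro a
      calc ∑' q, wolffTerm σ k t u a μ q ≤ M * ∑' q, wolffTerm σ k t u (2 * a) μ q :=
            hstep μ a
        _ ≤ M * (M ^ j * ∑' q, wolffTerm σ k t u (2 ^ j * (2 * a)) μ q) := by
            gcongr
            exact ih _
        _ = M ^ (j + 1) * ∑' q, wolffTerm σ k t u (2 ^ (j + 1) * a) μ q := by
            rw [← mul_assoc, ← pow_succ', show (2:ℝ) ^ j * (2 * a) = 2 ^ (j + 1) * a by ring]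
  calc ∑' q, wolffTerm σ k t u a μ q ≤ M ^ j * ∑' q, wolffTerm σ k t u (2 ^ j * a) μ q :=
        hiter j a
    _ ≤ M ^ j * ∑' q, wolffTerm σ k t u b μ q := by
        gcongr with q
        exact wolffTerm_anti hmono μ hb hba q

end WolffSum

theorem stmt17_general (n : ℕ) (k : ℝ → ℝ)
    (hk0 : ∀ r ∈ Ioi (0:ℝ), 0 ≤ k r) (hmono : AntitoneOn k (Ioi (0:ℝ)))
    (σ : Measure (Euc n)) [IsLocallyFiniteMeasure σ]
    (p : ℝ) (hp : 1 < p) (c : ℝ) (hc : 0 < c)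
    (hσ : Doubling n σ) (hLBO : LBO n σ k) :
    ∃ C : ℝ, 0 < C ∧
      ∀ (μ : Measure (Euc n)), IsLocallyFiniteMeasure μ →
        dyadicWolffSum n σ k p c μ ≤ ENNReal.ofReal C * dyadicWolffSum n σ k p 1 μ ∧
        dyadicWolffSum n σ k p 1 μ ≤ ENNReal.ofReal C * dyadicWolffSum n σ k p c μ := by
  obtain ⟨C₀, -, hD⟩ := hσ
  obtain ⟨A, -, hL⟩ := hLBO
  have hu : 1 ≤ p / (p - 1) := (one_le_div (by linarith)).2 (by linarith)
  -- `ENNReal.ofReal C₀` is by definition the coercion of `C₀.toNNReal`.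
  obtain ⟨M, hM, hcmp⟩ := exists_tsum_wolffTerm_le_pow_mul (D := C₀.toNNReal)
    (A := A.toNNReal) hk0 hmono hD hL (sub_nonneg.2 hu) hu
  obtain ⟨j, hj⟩ := pow_unbounded_of_one_lt (max c c⁻¹) one_lt_two
  have hcj : c ≤ 2 ^ j * 1 := by linarith [le_max_left c c⁻¹]
  have hcj' : 1 ≤ 2 ^ j * c := by
    have := (le_max_right c c⁻¹).trans hj.le
    rwa [inv_le_iff_one_le_mul₀ hc] at this
  have hMj : M ^ j ≤ ENNReal.ofReal ((M ^ j).toReal + 1) :=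
    (ENNReal.le_ofReal_iff_toReal_le (ENNReal.pow_ne_top hM) (by positivity)).2 (by linarith)
  refine ⟨(M ^ j).toReal + 1, by positivity, fun μ _ => ?_⟩
  simp only [dyadicWolffSum_eq_tsum_wolffTerm]
  constructor
  · exact (hcmp μ j one_pos hcj').trans (by gcongr)
  · exact (hcmp μ j hc hcj).trans (by gcongr)

/-- Let `k : (0,∞) → [0,∞)` be nonincreasing and lower semicontinuous,
`σ` locally finite and doubling with `(k,σ)` satisfying LBO, `1 < p < ∞` and `0 < c < ∞`.
Then, with constants independent of `μ`, for every locally finite positive Borel measure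
`μ`, `∑_Q k(c r_Q) σ(Q) (k̄(r_Q)(x_Q))^{p'-1} μ(Q)^{p'}` is comparable to
`∑_Q k(r_Q) σ(Q) (k̄(r_Q)(x_Q))^{p'-1} μ(Q)^{p'}`. -/
theorem stmt17 (n : ℕ) (hn : 0 < n) (k : ℝ → ℝ)
    (hk0 : ∀ r ∈ Ioi (0:ℝ), 0 ≤ k r) (hmono : AntitoneOn k (Ioi (0:ℝ)))
    (hlsc : LowerSemicontinuousOn k (Ioi (0:ℝ)))
    (σ : Measure (Euc n)) [IsLocallyFiniteMeasure σ]
    (p : ℝ) (hp : 1 < p) (c : ℝ) (hc : 0 < c)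
    (hσ : Doubling n σ) (hLBO : LBO n σ k) :
    ∃ C : ℝ, 0 < C ∧
      ∀ (μ : Measure (Euc n)), IsLocallyFiniteMeasure μ →
        dyadicWolffSum n σ k p c μ ≤ ENNReal.ofReal C * dyadicWolffSum n σ k p 1 μ ∧
        dyadicWolffSum n σ k p 1 μ ≤ ENNReal.ofReal C * dyadicWolffSum n σ k p c μ :=
  stmt17_general n k hk0 hmono σ p hp c hc hσ hLBO
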